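/- Let m ≥ 1, h > 0, B > 0, M ≥ 0. Let v : (Fin m)³ → ℝ³ with ‖v(l)‖₂ ≤ B for all l, and let U, Ũ : (Fin m)³ → ℝ³ with ‖U(k)‖₂ ≤ B and ‖Ũ(k)‖₂ ≤ B for all k. Let F, F̃ : ((Fin m)³ × (Fin m)³) → ℝ with |F(k,l)| ≤ M for all k, l. Define Ψ(k) = h³·Σ_l ‖v(l) − U(k)‖₂²·F(k,l) and Ψ̃(k) = h³·Σ_l ‖v(l) − Ũ(k)‖₂²·F̃(k,l). Then √(Σ_k (Ψ̃(k) − Ψ(k))²) ≤ 4B²·h³·m^{3/2}·√(Σ_{k,l}(F̃(k,l) − F(k,l))²) + 4B·h³·m³·M·√(Σ_k ‖Ũ(k) − U(k)‖₂²). -/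

import Mathlib

/-! Each term splits as `‖v - Ũ‖² (F̃ - F) + (‖v - Ũ‖² - ‖v - U‖²) F`, where `‖v - Ũ‖² ≤ 4B²` and
`|‖v - Ũ‖² - ‖v - U‖²| ≤ 4B ‖Ũ - U‖`. Summing over `l` bounds `|Ψ̃(k) - Ψ(k)|` pointwise;
Minkowski's inequality in `ℓ²` over `k` separates the two contributions, and Cauchy–Schwarz over
the `m³` indices `l` trades the `ℓ¹` sum in `l` for `√(m³)` times the `ℓ²` norm. -/

open Finset

section SqrtSumSq

variable {ι : Type*} [Fintype ι]

lemma Real.sqrt_sum_sq_eq_norm_toLp (f : ι → ℝ) :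
    √(∑ i, f i ^ 2) = ‖(WithLp.toLp 2 f : EuclideanSpace ℝ ι)‖ := by
  simp [EuclideanSpace.norm_eq]

lemma Real.sqrt_sum_sq_le_sqrt_sum_sq_of_abs_le {f g : ι → ℝ} (hfg : ∀ i, |f i| ≤ g i) :
    √(∑ i, f i ^ 2) ≤ √(∑ i, g i ^ 2) :=
  Real.sqrt_le_sqrt <| sum_le_sum fun i _ => sq_le_sq' (abs_le.mp (hfg i)).1 (abs_le.mp (hfg i)).2

lemma Real.sqrt_sum_sq_mul_add_mul_le {a b : ℝ} (ha : 0 ≤ a) (hb : 0 ≤ b) (f g : ι → ℝ) :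
    √(∑ i, (a * f i + b * g i) ^ 2) ≤ a * √(∑ i, f i ^ 2) + b * √(∑ i, g i ^ 2) := by
  simp only [Real.sqrt_sum_sq_eq_norm_toLp]
  calc ‖(WithLp.toLp 2 fun i => a * f i + b * g i : EuclideanSpace ℝ ι)‖
      = ‖a • (WithLp.toLp 2 f : EuclideanSpace ℝ ι) + b • WithLp.toLp 2 g‖ := rfl
    _ ≤ _ := by
      grw [norm_add_le, norm_smul, norm_smul, Real.norm_of_nonneg ha, Real.norm_of_nonneg hb]

lemma Real.sqrt_sum_sq_sum_abs_le {κ : Type*} [Fintype κ] (D : ι × κ → ℝ) :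
    √(∑ i, (∑ j, |D (i, j)|) ^ 2) ≤ √(Fintype.card κ) * √(∑ p, D p ^ 2) := by
  rw [← Real.sqrt_mul (Nat.cast_nonneg _), Fintype.sum_prod_type, mul_sum]
  refine Real.sqrt_le_sqrt <| sum_le_sum fun i _ => ?_
  simpa using sq_sum_le_card_mul_sum_sq (s := univ) (f := fun j => |D (i, j)|)

end SqrtSumSq

section SecondMoment

variable {E : Type*} [SeminormedAddCommGroup E]

lemma abs_sq_norm_sub_sq_norm_le (a b : E) : |‖a‖ ^ 2 - ‖b‖ ^ 2| ≤ (‖a‖ + ‖b‖) * ‖a - b‖ := by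
  rw [sq_sub_sq, abs_mul, abs_of_nonneg (by positivity)]
  exact mul_le_mul_of_nonneg_left (abs_norm_sub_norm_le a b) (by positivity)

lemma abs_sq_norm_sub_mul_sub_le {B M f f' : ℝ} {x y y' : E}
    (hx : ‖x‖ ≤ B) (hy : ‖y‖ ≤ B) (hy' : ‖y'‖ ≤ B) (hf : |f| ≤ M) :
    |‖x - y'‖ ^ 2 * f' - ‖x - y‖ ^ 2 * f| ≤ 4 * B ^ 2 * |f' - f| + 4 * B * M * ‖y' - y‖ := by
  have hB : 0 ≤ B := (norm_nonneg x).trans hx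
  have hy'x : ‖x - y'‖ ≤ 2 * B := by linarith [norm_sub_le x y']
  have hyx : ‖x - y‖ ≤ 2 * B := by linarith [norm_sub_le x y]
  have hsq : ‖x - y'‖ ^ 2 ≤ 4 * B ^ 2 := by nlinarith [norm_nonneg (x - y')]
  have hdiff : |‖x - y'‖ ^ 2 - ‖x - y‖ ^ 2| ≤ 4 * B * ‖y' - y‖ := by
    calc _ ≤ (‖x - y'‖ + ‖x - y‖) * ‖(x - y') - (x - y)‖ := abs_sq_norm_sub_sq_norm_le _ _
      _ ≤ 4 * B * ‖y' - y‖ := by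
        rw [sub_sub_sub_cancel_left, norm_sub_rev y y']
        gcongr
        linarith
  calc |‖x - y'‖ ^ 2 * f' - ‖x - y‖ ^ 2 * f|
      = |‖x - y'‖ ^ 2 * (f' - f) + (‖x - y'‖ ^ 2 - ‖x - y‖ ^ 2) * f| := by ring_nf
    _ ≤ ‖x - y'‖ ^ 2 * |f' - f| + |‖x - y'‖ ^ 2 - ‖x - y‖ ^ 2| * |f| := by
      grw [abs_add_le, abs_mul, abs_mul, abs_sq]
    _ ≤ 4 * B ^ 2 * |f' - f| + 4 * B * ‖y' - y‖ * M := by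
      gcongr
    _ = _ := by ring

lemma abs_sum_sq_norm_sub_mul_sub_le {ι : Type*} [Fintype ι] {B M : ℝ}
    {x : ι → E} {y y' : E} {f f' : ι → ℝ}
    (hx : ∀ l, ‖x l‖ ≤ B) (hy : ‖y‖ ≤ B) (hy' : ‖y'‖ ≤ B) (hf : ∀ l, |f l| ≤ M) :
    |∑ l, ‖x l - y'‖ ^ 2 * f' l - ∑ l, ‖x l - y‖ ^ 2 * f l|
      ≤ 4 * B ^ 2 * ∑ l, |f' l - f l| + 4 * B * M * Fintype.card ι * ‖y' - y‖ := by
  rw [← sum_sub_distrib]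
  calc _ ≤ ∑ l, |‖x l - y'‖ ^ 2 * f' l - ‖x l - y‖ ^ 2 * f l| := abs_sum_le_sum_abs _ _
    _ ≤ ∑ l, (4 * B ^ 2 * |f' l - f l| + 4 * B * M * ‖y' - y‖) :=
      sum_le_sum fun l _ => abs_sq_norm_sub_mul_sub_le (hx l) hy hy' (hf l)
    _ = _ := by
      rw [sum_add_distrib, ← mul_sum, sum_const, card_univ, nsmul_eq_mul]
      ring

end SecondMoment

theorem second_moment_stability_general (m : ℕ) (h B M : ℝ)
    (hh : 0 < h) (hB : 0 < B) (hM : 0 ≤ M)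
    (v U Ut : (Fin m × Fin m × Fin m) → EuclideanSpace ℝ (Fin 3))
    (hv : ∀ l, ‖v l‖ ≤ B) (hU : ∀ k, ‖U k‖ ≤ B) (hUt : ∀ k, ‖Ut k‖ ≤ B)
    (F Ft : (Fin m × Fin m × Fin m) × (Fin m × Fin m × Fin m) → ℝ)
    (hF : ∀ p, |F p| ≤ M) :
    Real.sqrt (∑ k : Fin m × Fin m × Fin m,
        ((h ^ 3 * ∑ l : Fin m × Fin m × Fin m, ‖v l - Ut k‖ ^ 2 * Ft (k, l))
          - (h ^ 3 * ∑ l : Fin m × Fin m × Fin m, ‖v l - U k‖ ^ 2 * F (k, l))) ^ 2)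
      ≤ 4 * B ^ 2 * h ^ 3 * (m : ℝ) ^ ((3 : ℝ) / 2) *
          Real.sqrt (∑ p : (Fin m × Fin m × Fin m) × (Fin m × Fin m × Fin m),
            (Ft p - F p) ^ 2)
        + 4 * B * h ^ 3 * (m : ℝ) ^ 3 * M *
          Real.sqrt (∑ k : Fin m × Fin m × Fin m, ‖Ut k - U k‖ ^ 2) := by
  have hcard : (Fintype.card (Fin m × Fin m × Fin m) : ℝ) = (m : ℝ) ^ 3 := by
    simp only [Fintype.card_prod, Fintype.card_fin]
    push_cast
    ring
  have hmoment : ∀ k, |h ^ 3 * ∑ l, ‖v l - Ut k‖ ^ 2 * Ft (k, l)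
      - h ^ 3 * ∑ l, ‖v l - U k‖ ^ 2 * F (k, l)|
      ≤ 4 * B ^ 2 * h ^ 3 * ∑ l, |Ft (k, l) - F (k, l)|
        + 4 * B * h ^ 3 * (m : ℝ) ^ 3 * M * ‖Ut k - U k‖ := by
    intro k
    rw [← mul_sub, abs_mul, abs_of_pos (by positivity), ← hcard]
    grw [abs_sum_sq_norm_sub_mul_sub_le hv (hU k) (hUt k) fun l => hF (k, l)]
    exact le_of_eq (by ring)
  have hsqrt_card : √((m : ℝ) ^ 3) = (m : ℝ) ^ ((3 : ℝ) / 2) := by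
    rw [Real.sqrt_eq_rpow, ← Real.rpow_natCast, ← Real.rpow_mul (Nat.cast_nonneg m)]
    norm_num
  calc _ ≤ √(∑ k, (4 * B ^ 2 * h ^ 3 * ∑ l, |Ft (k, l) - F (k, l)|
          + 4 * B * h ^ 3 * (m : ℝ) ^ 3 * M * ‖Ut k - U k‖) ^ 2) :=
        Real.sqrt_sum_sq_le_sqrt_sum_sq_of_abs_le hmoment
    _ ≤ 4 * B ^ 2 * h ^ 3 * √(∑ k, (∑ l, |Ft (k, l) - F (k, l)|) ^ 2)
          + 4 * B * h ^ 3 * (m : ℝ) ^ 3 * M * √(∑ k, ‖Ut k - U k‖ ^ 2) :=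
        Real.sqrt_sum_sq_mul_add_mul_le (by positivity) (by positivity) _ _
    _ ≤ _ := by
      grw [Real.sqrt_sum_sq_sum_abs_le fun p => Ft p - F p, hcard, hsqrt_card]
      exact le_of_eq (by ring)

/-- Perturbation bound for the discrete second velocity moment
`Ψ(k) = h³ Σ_l ‖v^l − U_k‖² F(k,l)` appearing in the discretization of the
temperature, used in the proof of Theorem 1 of the paper. -/
theorem second_moment_stability (m : ℕ) (hm : 1 ≤ m) (h B M : ℝ)
    (hh : 0 < h) (hB : 0 < B) (hM : 0 ≤ M)
    (v U Ut : (Fin m × Fin m × Fin m) → EuclideanSpace ℝ (Fin 3))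
    (hv : ∀ l, ‖v l‖ ≤ B) (hU : ∀ k, ‖U k‖ ≤ B) (hUt : ∀ k, ‖Ut k‖ ≤ B)
    (F Ft : (Fin m × Fin m × Fin m) × (Fin m × Fin m × Fin m) → ℝ)
    (hF : ∀ p, |F p| ≤ M) :
    Real.sqrt (∑ k : Fin m × Fin m × Fin m,
        ((h ^ 3 * ∑ l : Fin m × Fin m × Fin m, ‖v l - Ut k‖ ^ 2 * Ft (k, l))
          - (h ^ 3 * ∑ l : Fin m × Fin m × Fin m, ‖v l - U k‖ ^ 2 * F (k, l))) ^ 2)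
      ≤ 4 * B ^ 2 * h ^ 3 * (m : ℝ) ^ ((3 : ℝ) / 2) *
          Real.sqrt (∑ p : (Fin m × Fin m × Fin m) × (Fin m × Fin m × Fin m),
            (Ft p - F p) ^ 2)
        + 4 * B * h ^ 3 * (m : ℝ) ^ 3 * M *
          Real.sqrt (∑ k : Fin m × Fin m × Fin m, ‖Ut k - U k‖ ^ 2) :=
  second_moment_stability_general m h B M hh hB hM v U Ut hv hU hUt F Ft hF
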